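/- (Pasch property, Veblen–Young A3.) Let A, B, C be points with A ∩ B ∩ C = ∅ (not collinear), with B ∩ C = {a}, C ∩ A = {b}, A ∩ B = {c}. Let D and E be distinct points with a ∈ D (D is on line BC) and b ∈ E (E is on line CA), and let f be any line in D ∩ E. Then the line f meets the line c = AB: f ♢ c. -/
import Mathlib


/-!
Axiomatic projective space with lines as primary elements (Robinson,
"Projective space: lines and duality").

`perp I S` is `S^♢`, the set of lines incident to every line of `S`;
`lineSig I a b` is `Σ(a,b) = {a,b}^♢ \ {a,b}^♢♢`, the lines that belong to a
skew pair in `[a b]`.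
-/

namespace PSLD

variable {L : Type*}

/-- `S^♢`: the lines incident to every member of `S`. -/
def perp (I : L → L → Prop) (S : Set L) : Set L := {l | ∀ s ∈ S, I l s}

/-- `Σ(a,b) = {a,b}^♢ \ {a,b}^♢♢`. -/
def lineSig (I : L → L → Prop) (a b : L) : Set L :=
  perp I {a, b} \ perp I (perp I {a, b})

/-- A triad: pairwise incident distinct lines `a, b, c` with `c ∈ Σ(a,b)`. -/
def Triad (I : L → L → Prop) (a b c : L) : Prop :=
  a ≠ b ∧ I a b ∧ c ∈ lineSig I a b

/-- A nonempty type of lines with a reflexive symmetric incidence relation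
satisfying AXIOM [1], AXIOM [2.1], AXIOM [2.2], AXIOM [2.3]. -/
structure LineGeom (L : Type*) where
  /-- incidence -/
  I : L → L → Prop
  nonempty : Nonempty L
  refl : ∀ l, I l l
  symm : ∀ a b, I a b → I b a
  /-- AXIOM [1]: each `l^♢` contains a pairwise skew triple. -/
  ax1 : ∀ l : L, ∃ x y z : L, I x l ∧ I y l ∧ I z l ∧ ¬ I x y ∧ ¬ I y z ∧ ¬ I x z
  /-- AXIOM [2.1]: for distinct incident `a, b`, `[a b]` contains a skew pair. -/
  ax21 : ∀ a b : L, a ≠ b → I a b →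
    ∃ x ∈ perp I {a, b}, ∃ y ∈ perp I {a, b}, ¬ I x y
  /-- AXIOM [2.2]: for distinct incident `a, b` and `z ∈ Σ(a,b)`,
  `[a b z]` contains no skew pair. -/
  ax22 : ∀ a b z : L, a ≠ b → I a b → z ∈ lineSig I a b →
    ∀ x ∈ perp I {a, b, z}, ∀ y ∈ perp I {a, b, z}, I x y
  /-- AXIOM [2.3]: for distinct incident `a, b` and a skew pair `x, y ∈ [a b]`,
  every line of `[a b]` is incident to `x` or to `y`. -/
  ax23 : ∀ a b x y : L, a ≠ b → I a b → x ∈ perp I {a, b} → y ∈ perp I {a, b} →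
    ¬ I x y → ∀ l ∈ perp I {a, b}, I l x ∨ I l y

/-- A `LineGeom` together with a symmetric labelling `Σ_Y`, `Σ_∇` of the two
incidence classes of each `Σ(a,b)`, the derived points `pt a b = a Y b` and
planes `pl a b = a ∇ b`, and AXIOM [3], AXIOM [4]. -/
structure LabeledLineGeom (L : Type*) extends LineGeom L where
  /-- the incidence class `Σ_Y(a,b)` -/
  SY : L → L → Set L
  /-- the incidence class `Σ_∇(a,b)` -/
  SD : L → L → Set L
  SY_symm : ∀ a b : L, SY a b = SY b a
  SD_symm : ∀ a b : L, SD a b = SD b a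
  SY_union_SD : ∀ a b : L, a ≠ b → I a b → SY a b ∪ SD a b = lineSig I a b
  SY_disj_SD : ∀ a b : L, a ≠ b → I a b → SY a b ∩ SD a b = ∅
  SY_nonempty : ∀ a b : L, a ≠ b → I a b → (SY a b).Nonempty
  SD_nonempty : ∀ a b : L, a ≠ b → I a b → (SD a b).Nonempty
  SY_incident : ∀ a b : L, a ≠ b → I a b → ∀ x ∈ SY a b, ∀ y ∈ SY a b, I x y
  SD_incident : ∀ a b : L, a ≠ b → I a b → ∀ x ∈ SD a b, ∀ y ∈ SD a b, I x y
  SY_skew_SD : ∀ a b : L, a ≠ b → I a b → ∀ x ∈ SY a b, ∀ y ∈ SD a b, ¬ I x y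
  /-- the point `a Y b` -/
  pt : L → L → Set L
  /-- the plane `a ∇ b` -/
  pl : L → L → Set L
  /-- `a Y b = [a b c]` for any `c ∈ Σ_Y(a,b)` (well-defined). -/
  pt_spec : ∀ a b c : L, a ≠ b → I a b → c ∈ SY a b → pt a b = perp I {a, b, c}
  /-- `a ∇ b = [a b c]` for any `c ∈ Σ_∇(a,b)` (well-defined). -/
  pl_spec : ∀ a b c : L, a ≠ b → I a b → c ∈ SD a b → pl a b = perp I {a, b, c}
  /-- AXIOM [3]: each triad admits a triad with disjoint perp. -/
  ax3 : ∀ a b c : L, Triad I a b c → ∃ p q r : L, Triad I p q r ∧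
    perp I {a, b, c} ∩ perp I {p, q, r} = ∅
  /-- AXIOM [4]: any two points meet; any two planes meet. -/
  ax4 : ∀ a b p q : L, a ≠ b → I a b → p ≠ q → I p q →
    (pt a b ∩ pt p q).Nonempty ∧ (pl a b ∩ pl p q).Nonempty

/-- `P` is a point: `P = a Y b` for some distinct incident lines `a, b`. -/
def IsPoint (G : LabeledLineGeom L) (P : Set L) : Prop :=
  ∃ a b : L, a ≠ b ∧ G.I a b ∧ P = G.pt a b

/-- `π` is a plane: `π = a ∇ b` for some distinct incident lines `a, b`. -/
def IsPlane (G : LabeledLineGeom L) (π : Set L) : Prop :=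
  ∃ a b : L, a ≠ b ∧ G.I a b ∧ π = G.pl a b

/-! ### Auxiliary lemmas -/

lemma mem_perp_pair {I : L → L → Prop} {x a b : L} :
    x ∈ perp I {a, b} ↔ I x a ∧ I x b := by
  constructor
  · intro h; exact ⟨h a (by simp), h b (by simp)⟩
  · rintro ⟨h1, h2⟩ s hs
    simp only [Set.mem_insert_iff, Set.mem_singleton_iff] at hs
    rcases hs with rfl | rfl
    · exact h1
    · exact h2

lemma mem_perp_triple {I : L → L → Prop} {x a b c : L} :
    x ∈ perp I {a, b, c} ↔ I x a ∧ I x b ∧ I x c := by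
  constructor
  · intro h; exact ⟨h a (by simp), h b (by simp), h c (by simp)⟩
  · rintro ⟨h1, h2, h3⟩ s hs
    simp only [Set.mem_insert_iff, Set.mem_singleton_iff] at hs
    rcases hs with rfl | rfl | rfl
    · exact h1
    · exact h2
    · exact h3

lemma triad_perp_pairwise (G : LineGeom L) {u v w : L} (h : Triad G.I u v w) :
    ∀ x ∈ perp G.I {u, v, w}, ∀ y ∈ perp G.I {u, v, w}, G.I x y :=
  G.ax22 u v w h.1 h.2.1 h.2.2

lemma mem_self_perp (G : LineGeom L) {u v w : L} (h : Triad G.I u v w) :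
    u ∈ perp G.I {u, v, w} ∧ v ∈ perp G.I {u, v, w} ∧ w ∈ perp G.I {u, v, w} := by
  obtain ⟨huv, hIuv, hws⟩ := h
  have hwp : w ∈ perp G.I {u, v} := hws.1
  have hwu : G.I w u := (mem_perp_pair.mp hwp).1
  have hwv : G.I w v := (mem_perp_pair.mp hwp).2
  exact ⟨mem_perp_triple.mpr ⟨G.refl u, hIuv, G.symm w u hwu⟩,
    mem_perp_triple.mpr ⟨G.symm u v hIuv, G.refl v, G.symm w v hwv⟩,
    mem_perp_triple.mpr ⟨hwu, hwv, G.refl w⟩⟩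

/-- Key exchange lemma: a set `[u v w]` for a triad equals `[x y z]` for any
two of its distinct members `x, y` and a suitable `z ∈ Σ(x,y)`. -/
lemma exchange (G : LineGeom L) {u v w x y : L} (h : Triad G.I u v w)
    (hx : x ∈ perp G.I {u, v, w}) (hy : y ∈ perp G.I {u, v, w}) (hxy : x ≠ y) :
    ∃ z ∈ lineSig G.I x y, perp G.I {x, y, z} = perp G.I {u, v, w} := by
  have hpair := triad_perp_pairwise G h
  have hself := mem_self_perp G h
  have hPsub : perp G.I {u, v, w} ⊆ perp G.I {x, y} := fun l hl =>
    mem_perp_pair.mpr ⟨hpair l hl x hx, hpair l hl y hy⟩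
  have hstar : perp G.I (perp G.I {u, v, w}) ⊆ perp G.I {u, v, w} := fun l hl =>
    mem_perp_triple.mpr ⟨hl u hself.1, hl v hself.2.1, hl w hself.2.2⟩
  have hIxy : G.I x y := hpair x hx y hy
  obtain ⟨s, hs, t, ht, hst⟩ := G.ax21 x y hxy hIxy
  have hex : ∃ z ∈ perp G.I {u, v, w}, z ∉ perp G.I (perp G.I {x, y}) := by
    by_contra hcon
    push_neg at hcon
    have hsP : s ∈ perp G.I {u, v, w} :=
      hstar (fun z hz => G.symm z s (hcon z hz s hs))
    have htP : t ∈ perp G.I {u, v, w} :=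
      hstar (fun z hz => G.symm z t (hcon z hz t ht))
    exact hst (hpair s hsP t htP)
  obtain ⟨z, hzP, hzn⟩ := hex
  have hzsig : z ∈ lineSig G.I x y := ⟨hPsub hzP, hzn⟩
  refine ⟨z, hzsig, ?_⟩
  have htr2 : Triad G.I x y z := ⟨hxy, hIxy, hzsig⟩
  have hpair2 := triad_perp_pairwise G htr2
  apply Set.Subset.antisymm
  · intro l hl
    apply hstar
    intro m hm
    have hmQ : m ∈ perp G.I {x, y, z} :=
      mem_perp_triple.mpr ⟨hpair m hm x hx, hpair m hm y hy, hpair m hm z hzP⟩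
    exact hpair2 l hl m hmQ
  · intro l hl
    exact mem_perp_triple.mpr ⟨hpair l hl x hx, hpair l hl y hy, hpair l hl z hzP⟩

lemma isPoint_spec (G : LabeledLineGeom L) {P : Set L} (hP : IsPoint G P) :
    ∃ s t w : L, Triad G.I s t w ∧ w ∈ G.SY s t ∧ P = perp G.I {s, t, w} := by
  obtain ⟨s, t, hst, hIst, rfl⟩ := hP
  obtain ⟨w, hw⟩ := G.SY_nonempty s t hst hIst
  have hwsig : w ∈ lineSig G.I s t := by
    rw [← G.SY_union_SD s t hst hIst]; exact Set.mem_union_left _ hw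
  exact ⟨s, t, w, ⟨hst, hIst, hwsig⟩, hw, G.pt_spec s t w hst hIst hw⟩

lemma point_pairwise (G : LabeledLineGeom L) {P : Set L} (hP : IsPoint G P) :
    ∀ x ∈ P, ∀ y ∈ P, G.I x y := by
  obtain ⟨s, t, w, htr, _, hPeq⟩ := isPoint_spec G hP
  rw [hPeq]
  exact triad_perp_pairwise G.toLineGeom htr

/-- Two distinct lines of a point determine it: `P = x Y y`. -/
lemma point_unique (G : LabeledLineGeom L) {P : Set L} (hP : IsPoint G P)
    {x y : L} (hx : x ∈ P) (hy : y ∈ P) (hxy : x ≠ y) : P = G.pt x y := by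
  obtain ⟨s, t, w, htr, hw, hPeq⟩ := isPoint_spec G hP
  have hIxy : G.I x y := point_pairwise G hP x hx y hy
  obtain ⟨z, hzsig, hzeq⟩ := exchange G.toLineGeom htr (hPeq ▸ hx) (hPeq ▸ hy) hxy
  have hz2 : z ∈ G.SY x y ∪ G.SD x y := by
    rw [G.SY_union_SD x y hxy hIxy]; exact hzsig
  rcases hz2 with hzY | hzD
  · rw [G.pt_spec x y z hxy hIxy hzY, hzeq]; exact hPeq
  · exfalso
    have htr2 : Triad G.I x y z := ⟨hxy, hIxy, hzsig⟩
    obtain ⟨p, q, r, htr3, hdisj⟩ := G.ax3 x y z htr2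
    have hr : r ∈ G.SY p q ∪ G.SD p q := by
      rw [G.SY_union_SD p q htr3.1 htr3.2.1]; exact htr3.2.2
    obtain ⟨s', t', hst', hIst', hPpt⟩ := hP
    rcases hr with hrY | hrD
    · obtain ⟨g, hg1, hg2⟩ := (G.ax4 s' t' p q hst' hIst' htr3.1 htr3.2.1).1
      have hmem : g ∈ perp G.I {x, y, z} ∩ perp G.I {p, q, r} := by
        constructor
        · rw [hzeq, ← hPeq, hPpt]; exact hg1
        · rw [← G.pt_spec p q r htr3.1 htr3.2.1 hrY]; exact hg2
      rw [hdisj] at hmem; exact hmem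
    · obtain ⟨g, hg1, hg2⟩ := (G.ax4 x y p q hxy hIxy htr3.1 htr3.2.1).2
      have hmem : g ∈ perp G.I {x, y, z} ∩ perp G.I {p, q, r} := by
        constructor
        · rw [← G.pl_spec x y z hxy hIxy hzD]; exact hg1
        · rw [← G.pl_spec p q r htr3.1 htr3.2.1 hrD]; exact hg2
      rw [hdisj] at hmem; exact hmem

/-- Veblen–Young (A3), the Pasch property: if `A, B, C` are non-collinear
points with `B ∩ C = {a}`, `C ∩ A = {b}`, `A ∩ B = {c}`, and `D ≠ E` are
points with `a ∈ D`, `b ∈ E`, then any line `f ∈ D ∩ E` meets the line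
`c = AB`. -/
theorem pasch (G : LabeledLineGeom L) (A B C D E : Set L) (a b c f : L)
    (hA : IsPoint G A) (hB : IsPoint G B) (hC : IsPoint G C)
    (hD : IsPoint G D) (hE : IsPoint G E)
    (hnc : A ∩ B ∩ C = ∅)
    (ha : B ∩ C = {a}) (hb : C ∩ A = {b}) (hc : A ∩ B = {c})
    (hDE : D ≠ E) (haD : a ∈ D) (hbE : b ∈ E) (hf : f ∈ D ∩ E) :
    G.I f c := by
  have haBC : a ∈ B ∩ C := by rw [ha]; exact rfl
  have hbCA : b ∈ C ∩ A := by rw [hb]; exact rfl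
  have hcAB : c ∈ A ∩ B := by rw [hc]; exact rfl
  have haB := haBC.1; have haC := haBC.2
  have hbC := hbCA.1; have hbA := hbCA.2
  have hcA := hcAB.1; have hcB := hcAB.2
  have hfD := hf.1; have hfE := hf.2
  have hnc' : ∀ l, l ∈ A → l ∈ B → l ∈ C → False := by
    intro l h1 h2 h3
    have hl : l ∈ A ∩ B ∩ C := ⟨⟨h1, h2⟩, h3⟩
    rw [hnc] at hl; exact hl
  have Iab : G.I a b := point_pairwise G hC a haC b hbC
  have Ica : G.I c a := point_pairwise G hB c hcB a haB
  have Icb : G.I c b := point_pairwise G hA c hcA b hbA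
  have Ifa : G.I f a := point_pairwise G hD f hfD a haD
  have Ifb : G.I f b := point_pairwise G hE f hfE b hbE
  have hab : a ≠ b := by rintro rfl; exact hnc' a hbA haB haC
  by_cases hfc : f = c
  · subst hfc; exact G.refl f
  by_cases hfa : f = a
  · subst hfa; exact G.symm c f Ica
  by_cases hfb : f = b
  · subst hfb; exact G.symm c f Icb
  have hfp : f ∈ perp G.I {a, b} := mem_perp_pair.mpr ⟨Ifa, Ifb⟩
  have hcp : c ∈ perp G.I {a, b} := mem_perp_pair.mpr ⟨Ica, Icb⟩
  by_cases hfcore : f ∈ perp G.I (perp G.I {a, b})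
  · exact hfcore c hcp
  by_cases hccore : c ∈ perp G.I (perp G.I {a, b})
  · exact G.symm c f (hccore f hfp)
  have hfsig : f ∈ lineSig G.I a b := ⟨hfp, hfcore⟩
  have hcsig : c ∈ lineSig G.I a b := ⟨hcp, hccore⟩
  have hf2 : f ∈ G.SY a b ∪ G.SD a b := by
    rw [G.SY_union_SD a b hab Iab]; exact hfsig
  have hc2 : c ∈ G.SY a b ∪ G.SD a b := by
    rw [G.SY_union_SD a b hab Iab]; exact hcsig
  -- the structure of the point `C`
  obtain ⟨s, t, w, htrC, hwC, hCspec⟩ := isPoint_spec G hC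
  obtain ⟨z, hzsig, hzeq⟩ :=
    exchange G.toLineGeom htrC (hCspec ▸ haC) (hCspec ▸ hbC) hab
  have hzeqC : perp G.I {a, b, z} = C := by rw [hzeq, ← hCspec]
  have hz2 : z ∈ G.SY a b ∪ G.SD a b := by
    rw [G.SY_union_SD a b hab Iab]; exact hzsig
  -- if `f ∈ C` then `D = C = E`, contradiction
  have hfCfalse : f ∈ C → False := by
    intro hfC
    have hDeq : D = G.pt a f := point_unique G hD haD hfD (Ne.symm hfa)
    have hCeq2 : C = G.pt a f := point_unique G hC haC hfC (Ne.symm hfa)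
    have hEeq : E = G.pt b f := point_unique G hE hbE hfE (Ne.symm hfb)
    have hCeq3 : C = G.pt b f := point_unique G hC hbC hfC (Ne.symm hfb)
    exact hDE (hDeq.trans (hCeq2.symm.trans (hCeq3.trans hEeq.symm)))
  -- if `c ∈ C` then noncollinearity fails
  have hcCfalse : c ∈ C → False := fun hcC => hnc' c hcA hcB hcC
  rcases hf2 with hfY | hfDc
  · rcases hc2 with hcY | hcDc
    · exact G.SY_incident a b hab Iab f hfY c hcY
    · rcases hz2 with hzY | hzD
      · exact absurd (hzeqC ▸ mem_perp_triple.mpr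
          ⟨Ifa, Ifb, G.SY_incident a b hab Iab f hfY z hzY⟩) (fun h => hfCfalse h)
      · exact absurd (hzeqC ▸ mem_perp_triple.mpr
          ⟨Ica, Icb, G.SD_incident a b hab Iab c hcDc z hzD⟩) (fun h => hcCfalse h)
  · rcases hc2 with hcY | hcDc
    · rcases hz2 with hzY | hzD
      · exact absurd (hzeqC ▸ mem_perp_triple.mpr
          ⟨Ica, Icb, G.SY_incident a b hab Iab c hcY z hzY⟩) (fun h => hcCfalse h)
      · exact absurd (hzeqC ▸ mem_perp_triple.mpr
          ⟨Ifa, Ifb, G.SD_incident a b hab Iab f hfDc z hzD⟩) (fun h => hfCfalse h)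
    · exact G.SD_incident a b hab Iab f hfDc c hcDc

end PSLD
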